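/- Let P = {P_1, …, P_n} be a finite measurable partition of [0,1] and let ε > 0 and N₀ ∈ ℕ. Then there exists M > N₀ and a measurable set Y ⊆ [0,1] with λ(Y) ≥ 1 − ε such that for every 1 ≤ i ≤ n and every 0 ≤ k < M, the sets P_i ∩ Y and [k/M, (k+1)/M) ∩ Y are either disjoint or one contains the other in such a way that each interval piece [k/M,(k+1)/M) ∩ Y is contained in a single P_i ∩ Y. -/

import Mathlib

open MeasureTheory Set
open scoped ENNReal NNReal

/-- The quantity `|f|_ε`: infimum over measurable `X ⊆ [0,1]` with `λ(X) ≥ 1 - ε`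
of the essential supremum of `|f|` on `X`. -/
noncomputable def normEps (f : ℝ → ℂ) (ε : ℝ) : ℝ≥0∞ :=
  ⨅ (X : Set ℝ) (_ : MeasurableSet X) (_ : X ⊆ Icc (0:ℝ) 1)
    (_ : ENNReal.ofReal (1 - ε) ≤ volume X),
    essSup (fun x => (‖f x‖₊ : ℝ≥0∞)) (volume.restrict X)

/-! By regularity of Lebesgue measure each `P i` contains a compact `K i` whose `δ`-thickening
exceeds `P i` only by a set of small measure. Discard the points outside every `K i`, and the
points of the thickening of some `K i` outside `P i`: what remains has measure close to `1`, and a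
set of diameter `< δ` through a point of `K j` meets it only inside `P j`. The intervals
`[k/M, (k+1)/M)` with `1/M < δ` are such sets. -/

open Metric

theorem MeasurableSet.exists_isCompact_thickening_sdiff_lt {α : Type*} [MetricSpace α]
    [MeasurableSpace α] [OpensMeasurableSpace α] {μ : Measure α} [μ.OuterRegular]
    [μ.InnerRegularCompactLTTop] {A : Set α} (hA : MeasurableSet A) (h'A : μ A ≠ ∞)
    {η : ℝ≥0∞} (hη : η ≠ 0) :
    ∃ K ⊆ A, IsCompact K ∧ μ (A \ K) < η ∧ ∃ δ > 0, μ (thickening δ K \ A) < η := by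
  obtain ⟨U, hAU, hUo, -, hU⟩ := hA.exists_isOpen_sdiff_lt h'A hη
  obtain ⟨K, hKA, hKc, hK⟩ := hA.exists_isCompact_sdiff_lt h'A hη
  obtain ⟨δ, hδ, hKU⟩ := hKc.exists_thickening_subset_open hUo (hKA.trans hAU)
  exact ⟨K, hKA, hKc, hK, δ, hδ, (measure_mono (sdiff_subset_sdiff_left hKU)).trans_lt hU⟩

section ThickeningCore

variable {α ι : Type*} [PseudoMetricSpace α] (P K : ι → Set α) (δ : ℝ)

def thickeningCore : Set α :=
  (⋃ i, K i) \ ⋃ i, (thickening δ (K i) \ P i)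

theorem measurableSet_thickeningCore [MeasurableSpace α] [OpensMeasurableSpace α] [Countable ι]
    (hP : ∀ i, MeasurableSet (P i)) (hK : ∀ i, MeasurableSet (K i)) :
    MeasurableSet (thickeningCore P K δ) :=
  (MeasurableSet.iUnion hK).diff
    (MeasurableSet.iUnion fun i => isOpen_thickening.measurableSet.diff (hP i))

theorem exists_inter_thickeningCore_subset [Nonempty ι] {S : Set α}
    (hS : ∀ x ∈ S, ∀ y ∈ S, dist x y < δ) : ∃ j, S ∩ thickeningCore P K δ ⊆ P j := by
  obtain h | ⟨x, hxS, hxK, -⟩ := (S ∩ thickeningCore P K δ).eq_empty_or_nonempty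
  · exact ⟨Classical.arbitrary ι, h ▸ empty_subset _⟩
  obtain ⟨j, hxj⟩ := mem_iUnion.mp hxK
  refine ⟨j, fun y ⟨hyS, _, hyY⟩ => by_contra fun hyP => hyY (mem_iUnion.mpr ⟨j, ?_, hyP⟩)⟩
  exact mem_thickening_iff.mpr ⟨x, hxj, hS y hyS x hxS⟩

theorem measure_iUnion_sdiff_thickeningCore_le [Fintype ι] [MeasurableSpace α]
    (μ : Measure α) :
    μ ((⋃ i, P i) \ thickeningCore P K δ) ≤
      ∑ i, (μ (P i \ K i) + μ (thickening δ (K i) \ P i)) := by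
  have hsub : (⋃ i, P i) \ thickeningCore P K δ ⊆
      ⋃ i, ((P i \ K i) ∪ (thickening δ (K i) \ P i)) := by
    rintro x ⟨hxP, hxY⟩
    obtain ⟨j, hxj⟩ := mem_iUnion.mp hxP
    by_cases hxK : x ∈ ⋃ i, K i
    · obtain ⟨i, hi⟩ := mem_iUnion.mp (of_not_not fun h => hxY ⟨hxK, h⟩)
      exact mem_iUnion.mpr ⟨i, Or.inr hi⟩
    · exact mem_iUnion.mpr ⟨j, Or.inl ⟨hxj, fun h => hxK (mem_iUnion.mpr ⟨j, h⟩)⟩⟩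
  calc _ ≤ μ (⋃ i, ((P i \ K i) ∪ (thickening δ (K i) \ P i))) := measure_mono hsub
    _ ≤ ∑ i, μ ((P i \ K i) ∪ (thickening δ (K i) \ P i)) := measure_iUnion_fintype_le _ _
    _ ≤ _ := Finset.sum_le_sum fun i _ => measure_union_le _ _

end ThickeningCore

theorem exists_isCompact_measure_sdiff_thickeningCore_le {α ι : Type*} [MetricSpace α]
    [MeasurableSpace α] [OpensMeasurableSpace α] {μ : Measure α} [μ.OuterRegular]
    [μ.InnerRegularCompactLTTop] [Fintype ι] [Nonempty ι] {P : ι → Set α}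
    (hP : ∀ i, MeasurableSet (P i)) (hPfin : ∀ i, μ (P i) ≠ ∞) {η : ℝ≥0∞} (hη : η ≠ 0) :
    ∃ K : ι → Set α, (∀ i, K i ⊆ P i ∧ IsCompact (K i)) ∧
      ∃ δ > 0, μ ((⋃ i, P i) \ thickeningCore P K δ) ≤ η := by
  set η' := η / (2 * Fintype.card ι)
  have hη' : η' ≠ 0 := (ENNReal.div_pos hη
    (ENNReal.mul_ne_top ENNReal.ofNat_ne_top (ENNReal.natCast_ne_top _))).ne'
  choose K hKP hKc hPK r hr hKr using
    fun i => (hP i).exists_isCompact_thickening_sdiff_lt (hPfin i) hη'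
  set δ := Finset.univ.inf' Finset.univ_nonempty r
  have hδr (i : ι) : δ ≤ r i := Finset.inf'_le _ (Finset.mem_univ i)
  refine ⟨K, fun i => ⟨hKP i, hKc i⟩, δ, (Finset.lt_inf'_iff _).mpr fun i _ => hr i, ?_⟩
  calc _ ≤ ∑ i, (μ (P i \ K i) + μ (thickening δ (K i) \ P i)) :=
        measure_iUnion_sdiff_thickeningCore_le P K δ μ
    _ ≤ ∑ _i : ι, (η' + η') := Finset.sum_le_sum fun i _ => add_le_add (hPK i).le
        ((measure_mono (sdiff_subset_sdiff_left (thickening_mono (hδr i) _))).trans (hKr i).le)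
    _ = (2 * Fintype.card ι) * η' := by
        rw [Finset.sum_const, Finset.card_univ, nsmul_eq_mul, ← two_mul]
        ring
    _ ≤ η := ENNReal.mul_div_le

theorem Real.dist_lt_of_mem_Ico {x y a b : ℝ} (hx : x ∈ Ico a b) (hy : y ∈ Ico a b) :
    dist x y < b - a := by
  rw [Real.dist_eq, abs_sub_lt_iff]
  constructor <;> linarith [hx.1, hx.2, hy.1, hy.2]

theorem partition_approx_by_intervals_general (n : ℕ) (P : Fin n → Set ℝ)
    (hPm : ∀ i, MeasurableSet (P i))
    (hPu : (⋃ i, P i) = Icc (0:ℝ) 1)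
    (ε : ℝ) (hε : 0 < ε) (N₀ : ℕ) :
    ∃ M : ℕ, N₀ < M ∧ ∃ Y : Set ℝ, MeasurableSet Y ∧ Y ⊆ Icc (0:ℝ) 1 ∧
      ENNReal.ofReal (1 - ε) ≤ volume Y ∧
      ∀ k : ℕ, k < M → ∃ i : Fin n,
        Ico ((k:ℝ)/M) (((k:ℝ)+1)/M) ∩ Y ⊆ P i ∩ Y := by
  have : Nonempty (Fin n) := by
    obtain ⟨i, -⟩ := mem_iUnion.mp (hPu.symm ▸ left_mem_Icc.mpr zero_le_one : (0:ℝ) ∈ ⋃ i, P i)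
    exact ⟨i⟩
  have hPfin (i : Fin n) : volume (P i) ≠ ∞ :=
    measure_ne_top_of_subset (hPu ▸ subset_iUnion P i) measure_Icc_lt_top.ne
  obtain ⟨K, hK, δ, hδ, hYc⟩ :=
    exists_isCompact_measure_sdiff_thickeningCore_le hPm hPfin (ENNReal.ofReal_pos.mpr hε).ne'
  rw [hPu] at hYc
  obtain ⟨m, hm⟩ := exists_nat_one_div_lt hδ
  set Y := thickeningCore P K δ
  refine ⟨N₀ + m + 1, by omega, Y, ?_, ?_, ?_, fun k _ => ?_⟩
  · exact measurableSet_thickeningCore P K δ hPm fun i => (hK i).2.measurableSet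
  · exact hPu ▸ (sdiff_subset : Y ⊆ _).trans (iUnion_mono fun i => (hK i).1)
  · calc ENNReal.ofReal (1 - ε) = volume (Icc (0:ℝ) 1) - ENNReal.ofReal ε := by
          rw [ENNReal.ofReal_sub 1 hε.le, Real.volume_Icc, sub_zero, ENNReal.ofReal_one]
      _ ≤ volume (Icc (0:ℝ) 1) - volume (Icc (0:ℝ) 1 \ Y) := tsub_le_tsub_left hYc _
      _ ≤ volume Y := le_measure_sdiff.trans (measure_mono (by simp))
  · have hwidth : ((k:ℝ) + 1) / ↑(N₀ + m + 1) - k / ↑(N₀ + m + 1) < δ := by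
      rw [← sub_div, add_sub_cancel_left]
      refine lt_of_le_of_lt ?_ hm
      gcongr
      push_cast
      linarith
    obtain ⟨i, hi⟩ := exists_inter_thickeningCore_subset P K δ
      fun x hx y hy => (Real.dist_lt_of_mem_Ico hx hy).trans hwidth
    exact ⟨i, subset_inter hi inter_subset_right⟩

theorem partition_approx_by_intervals (n : ℕ) (P : Fin n → Set ℝ)
    (hPm : ∀ i, MeasurableSet (P i))
    (hPd : Pairwise (Function.onFun Disjoint P))
    (hPu : (⋃ i, P i) = Icc (0:ℝ) 1)
    (ε : ℝ) (hε : 0 < ε) (N₀ : ℕ) :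
    ∃ M : ℕ, N₀ < M ∧ ∃ Y : Set ℝ, MeasurableSet Y ∧ Y ⊆ Icc (0:ℝ) 1 ∧
      ENNReal.ofReal (1 - ε) ≤ volume Y ∧
      ∀ k : ℕ, k < M → ∃ i : Fin n,
        Ico ((k:ℝ)/M) (((k:ℝ)+1)/M) ∩ Y ⊆ P i ∩ Y :=
  partition_approx_by_intervals_general n P hPm hPu ε hε N₀
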